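/- Gaussian likelihood ratio bound for prior alignment: let p be the density of N(μ₁, v²) and q the density of N(μ₂, v²) on ℝ. Then for any x, p(x)/q(x) = exp((μ₁ − μ₂)(2x − μ₁ − μ₂)/(2v²)), and for any event A, P_{X~p}(A) ≤ exp(|μ₁ − μ₂|·(|μ₁| + |μ₂| + 2M)/(2v²)) · P_{X~q}(A) + P_{X~p}(|X| > M) for any M > 0. -/

import Mathlib

/-!
The two densities differ by the factor `exp ((μ₁ - μ₂) (2x - μ₁ - μ₂) / 2v)`, since the quadratic
terms `x²` of their exponents cancel. On `{|x| ≤ M}` this factor is at most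
`exp (|μ₁ - μ₂| (|μ₁| + |μ₂| + 2M) / 2v)`, so there `N(μ₁, v)` is dominated by that multiple of
`N(μ₂, v)`; the mass of `A` outside this set is at most the tail `N(μ₁, v) {M < |x|}`.
-/

open MeasureTheory ProbabilityTheory

section ChangeOfMeasure

variable {α : Type*} [MeasurableSpace α]

theorem measure_le_mul_add_measure_compl {μ ν : Measure α} {c : ENNReal} {S : Set α}
    (h : μ.restrict S ≤ c • ν) (A : Set α) : μ A ≤ c * ν A + μ Sᶜ :=
  calc μ A ≤ μ (A ∩ S) + μ (A \ S) := measure_le_inter_add_sdiff μ A S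
    _ ≤ c * ν A + μ Sᶜ := by
      gcongr
      · exact (Measure.le_restrict_apply S A).trans (h A)
      · exact Set.sdiff_subset_compl A S

theorem withDensity_restrict_le_smul_withDensity {ν : Measure α} {f g : α → ENNReal}
    (hg : Measurable g) {S : Set α} (hS : MeasurableSet S) {c : ENNReal}
    (hfg : ∀ x ∈ S, f x ≤ c * g x) :
    (ν.withDensity f).restrict S ≤ c • ν.withDensity g := by
  rw [restrict_withDensity hS, ← withDensity_smul c hg]
  calc (ν.restrict S).withDensity f ≤ (ν.restrict S).withDensity (c • g) :=
        withDensity_mono (ae_restrict_of_forall_mem hS hfg)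
    _ = (ν.withDensity (c • g)).restrict S := (restrict_withDensity hS _).symm
    _ ≤ ν.withDensity (c • g) := Measure.restrict_le_self

end ChangeOfMeasure

section GaussianRatio

variable {μ₁ μ₂ : ℝ} {v : NNReal}

theorem gaussianPDFReal_eq_exp_mul_gaussianPDFReal (hv : v ≠ 0) (x : ℝ) :
    gaussianPDFReal μ₁ v x
      = Real.exp ((μ₁ - μ₂) * (2 * x - μ₁ - μ₂) / (2 * v)) * gaussianPDFReal μ₂ v x := by
  have hv' : (v : ℝ) ≠ 0 := NNReal.coe_ne_zero.mpr hv
  rw [gaussianPDFReal, gaussianPDFReal, mul_left_comm, ← Real.exp_add]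
  congr 2
  field_simp
  ring

theorem gaussianPDFReal_div_gaussianPDFReal (hv : v ≠ 0) (x : ℝ) :
    gaussianPDFReal μ₁ v x / gaussianPDFReal μ₂ v x
      = Real.exp ((μ₁ - μ₂) * (2 * x - μ₁ - μ₂) / (2 * v)) := by
  rw [gaussianPDFReal_eq_exp_mul_gaussianPDFReal hv x,
    mul_div_cancel_right₀ _ (gaussianPDFReal_pos μ₂ v x hv).ne']

theorem mul_two_mul_sub_le_of_abs_le (a b : ℝ) {x M : ℝ} (hx : |x| ≤ M) :
    (a - b) * (2 * x - a - b) ≤ |a - b| * (|a| + |b| + 2 * M) :=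
  calc (a - b) * (2 * x - a - b) ≤ |a - b| * |2 * x - a - b| := by
        rw [← abs_mul]; exact le_abs_self _
    _ ≤ |a - b| * (|a| + |b| + 2 * M) := by
        gcongr
        rw [abs_le] at hx ⊢
        constructor <;> linarith [le_abs_self a, neg_abs_le a, le_abs_self b, neg_abs_le b]

theorem gaussianPDF_le_ofReal_exp_mul_gaussianPDF (hv : v ≠ 0) {x M : ℝ} (hx : |x| ≤ M) :
    gaussianPDF μ₁ v x
      ≤ ENNReal.ofReal (Real.exp (|μ₁ - μ₂| * (|μ₁| + |μ₂| + 2 * M) / (2 * v)))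
        * gaussianPDF μ₂ v x := by
  rw [gaussianPDF, gaussianPDF, ← ENNReal.ofReal_mul (Real.exp_nonneg _),
    gaussianPDFReal_eq_exp_mul_gaussianPDFReal (μ₂ := μ₂) hv x]
  gcongr ENNReal.ofReal (Real.exp (?_ / _) * _)
  · exact gaussianPDFReal_nonneg μ₂ v x
  · exact mul_two_mul_sub_le_of_abs_le μ₁ μ₂ hx

end GaussianRatio

/-- Gaussian likelihood ratio bound for prior alignment.  Let `p` be the
density of `N(μ₁, v²)` and `q` the density of `N(μ₂, v²)`.  Then
`p x / q x = exp((μ₁ − μ₂)(2x − μ₁ − μ₂)/(2v²))`, and for any event `A` and any `M > 0`,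
`P_{X~p}(A) ≤ exp(|μ₁ − μ₂|(|μ₁| + |μ₂| + 2M)/(2v²)) · P_{X~q}(A) + P_{X~p}(|X| > M)`. -/
theorem gaussian_likelihood_ratio_bound
    (μ₁ μ₂ : ℝ) (v2 : NNReal) (hv : 0 < (v2 : ℝ)) :
    (∀ x : ℝ,
      gaussianPDFReal μ₁ v2 x / gaussianPDFReal μ₂ v2 x
        = Real.exp ((μ₁ - μ₂) * (2 * x - μ₁ - μ₂) / (2 * (v2 : ℝ)))) ∧
    (∀ (A : Set ℝ), MeasurableSet A → ∀ M : ℝ, 0 < M →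
      gaussianReal μ₁ v2 A
        ≤ ENNReal.ofReal
            (Real.exp (|μ₁ - μ₂| * (|μ₁| + |μ₂| + 2 * M) / (2 * (v2 : ℝ))))
            * gaussianReal μ₂ v2 A
          + gaussianReal μ₁ v2 {x : ℝ | M < |x|}) := by
  have hv0 : v2 ≠ 0 := NNReal.coe_ne_zero.mp hv.ne'
  refine ⟨gaussianPDFReal_div_gaussianPDFReal hv0, fun A _ M _ => ?_⟩
  have hS : MeasurableSet {x : ℝ | |x| ≤ M} := measurableSet_le measurable_abs measurable_const
  have hdom := withDensity_restrict_le_smul_withDensity (ν := volume)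
    (measurable_gaussianPDF μ₂ v2) hS
    (fun x hx => gaussianPDF_le_ofReal_exp_mul_gaussianPDF (μ₁ := μ₁) hv0 hx)
  rw [← gaussianReal_of_var_ne_zero μ₁ hv0, ← gaussianReal_of_var_ne_zero μ₂ hv0] at hdom
  simpa only [Set.compl_ofPred, not_le] using measure_le_mul_add_measure_compl hdom A
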